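/- There exist two nonautonomous dynamical systems $(X,\{f_n\})$ and $(Y,\{g_n\})$ and a finite-to-one extension $\pi : X \to Y$ (continuous surjection with $\pi \circ f_n = g_n \circ \pi$ for all $n$ and $\sup_{y \in Y} \#\pi^{-1}(y) \le 2$) such that $h_{top}(X, \{f_n\}) > h_{top}(Y, \{g_n\})$. -/

import Mathlib

open Filter MeasureTheory

noncomputable section

def compSeq {X : Type*} (f : ℕ → X → X) : ℕ → X → X
  | 0 => id
  | n + 1 => f n ∘ compSeq f n

/-- `E` is an `(n, ε)`-separated set for the nonautonomous system `(X, f)`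
with respect to the distance function `d`. -/
def IsSeparatedSet {X : Type*} (d : X → X → ℝ) (f : ℕ → X → X) (n : ℕ) (ε : ℝ)
    (E : Set X) : Prop :=
  ∀ x ∈ E, ∀ y ∈ E, x ≠ y → ∃ j < n, ε < d (compSeq f j x) (compSeq f j y)

/-- `F` is an `(n, ε)`-spanning set for the nonautonomous system `(X, f)`. -/
def IsSpanningSet {X : Type*} (d : X → X → ℝ) (f : ℕ → X → X) (n : ℕ) (ε : ℝ)
    (F : Set X) : Prop :=
  ∀ x : X, ∃ y ∈ F, ∀ j < n, d (compSeq f j x) (compSeq f j y) < ε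

/-- maximal cardinality of an `(n, ε)`-separated set. -/
def sepNum {X : Type*} (d : X → X → ℝ) (f : ℕ → X → X) (n : ℕ) (ε : ℝ) : ℕ :=
  sSup {c | ∃ E : Finset X, IsSeparatedSet d f n ε ↑E ∧ E.card = c}

/-- minimal cardinality of an `(n, ε)`-spanning set. -/
def spanNum {X : Type*} (d : X → X → ℝ) (f : ℕ → X → X) (n : ℕ) (ε : ℝ) : ℕ :=
  sInf {c | ∃ F : Finset X, IsSpanningSet d f n ε ↑F ∧ F.card = c}

/-- Topological entropy of a nonautonomous dynamical system, via separated sets. -/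
def nadsEntropy {X : Type*} (d : X → X → ℝ) (f : ℕ → X → X) : EReal :=
  ⨆ (ε : ℝ) (_ : 0 < ε),
    atTop.limsup fun n : ℕ => ((Real.log (sepNum d f n ε) / n : ℝ) : EReal)

end

/-- A nonautonomous dynamical system: a compact metric space together with a
sequence of continuous self-maps. -/
structure NADS where
  (carrier : Type)
  [met : MetricSpace carrier]
  [cpt : CompactSpace carrier]
  (maps : ℕ → carrier → carrier)
  (cont : ∀ n, Continuous (maps n))

attribute [instance] NADS.met NADS.cpt

/-!
On the Cantor space `ℕ → Bool` with the metric `2^{-(first index of disagreement)}`, let the `n`-th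
map overwrite the coordinate `0` by the coordinate `n + 1`. Then the coordinate `0` of `f_1^j x` is
`x j`, so the `2^n` words of length `n` give an `(n, 1/2)`-separated set and the entropy is at least
`log 2`. Forgetting the coordinate `0` is a two-to-one factor map onto the Cantor space with
identity maps, and a system of identity maps on a compact space has bounded separation numbers,
hence entropy `0`: the information lost by the factor is exactly what the maps move into view.
-/

section SeparatedSets

variable {X : Type*} {d : X → X → ℝ} {f : ℕ → X → X} {n : ℕ} {ε : ℝ}

theorem compSeq_id (j : ℕ) : compSeq (fun _ => (id : X → X)) j = id := by
  induction j with
  | zero => rfl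
  | succ j ih => simp only [compSeq, ih, Function.comp_id]

theorem sepNum_le_of_forall_card_le {N : ℕ}
    (h : ∀ E : Finset X, IsSeparatedSet d f n ε E → E.card ≤ N) : sepNum d f n ε ≤ N :=
  csSup_le ⟨0, ∅, by simp [IsSeparatedSet], rfl⟩ fun _ ⟨E, hE, hc⟩ => hc ▸ h E hE

theorem IsSeparatedSet.card_le_sepNum {N : ℕ}
    (h : ∀ E : Finset X, IsSeparatedSet d f n ε E → E.card ≤ N) {E : Finset X}
    (hE : IsSeparatedSet d f n ε E) : E.card ≤ sepNum d f n ε :=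
  le_csSup ⟨N, fun _ ⟨F, hF, hc⟩ => hc ▸ h F hF⟩ ⟨E, hE, rfl⟩

theorem nadsEntropy_nonpos_of_sepNum_bounded
    (h : ∀ ε > 0, ∃ N : ℕ, ∀ n, sepNum d f n ε ≤ N) : nadsEntropy d f ≤ 0 := by
  refine iSup₂_le fun ε hε => ?_
  obtain ⟨N, hN⟩ := h ε hε
  have hlog (n : ℕ) : Real.log (sepNum d f n ε) ≤ Real.log N := by
    rcases Nat.eq_zero_or_pos (sepNum d f n ε) with h0 | hpos
    · simpa [h0] using Real.log_natCast_nonneg N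
    · exact Real.log_le_log (by exact_mod_cast hpos) (by exact_mod_cast hN n)
  have hbound (n : ℕ) :
      ((Real.log (sepNum d f n ε) / n : ℝ) : EReal) ≤ ((Real.log N / n : ℝ) : EReal) :=
    EReal.coe_le_coe_iff.2 (div_le_div_of_nonneg_right (hlog n) n.cast_nonneg)
  have hlim : Tendsto (fun n : ℕ => ((Real.log N / n : ℝ) : EReal)) atTop (nhds 0) :=
    EReal.tendsto_coe.2 (tendsto_const_div_atTop_nhds_zero_nat _)
  exact (limsup_le_limsup (Eventually.of_forall hbound)).trans_eq hlim.limsup_eq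

theorem log_le_nadsEntropy_of_pow_le_sepNum {k : ℕ} (hk : 0 < k) (hε : 0 < ε)
    (h : ∀ n, k ^ n ≤ sepNum d f n ε) : (Real.log k : EReal) ≤ nadsEntropy d f := by
  refine le_iSup₂_of_le ε hε (le_limsup_of_frequently_le ?_)
  refine ((eventually_gt_atTop 0).mono fun n hn => ?_).frequently
  have hn' : (0 : ℝ) < n := by exact_mod_cast hn
  have hlog : n * Real.log k ≤ Real.log (sepNum d f n ε) := by
    rw [← Real.log_pow]
    exact Real.log_le_log (by positivity) (by exact_mod_cast h n)
  exact EReal.coe_le_coe_iff.2 ((le_div_iff₀ hn').2 (by linarith))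

end SeparatedSets

section IdentitySystem

variable {X : Type*} [PseudoMetricSpace X] [CompactSpace X]

theorem exists_sepNum_id_le {ε : ℝ} (hε : 0 < ε) :
    ∃ N : ℕ, ∀ n, sepNum (fun x y : X => dist x y) (fun _ => id) n ε ≤ N := by
  obtain ⟨t, -, ht, hcover⟩ :=
    finite_cover_balls_of_compact (isCompact_univ (X := X)) (half_pos hε)
  have hcenter (x : X) : ∃ c ∈ t, dist x c < ε / 2 := by simpa using hcover (Set.mem_univ x)
  choose c hct hc using hcenter
  refine ⟨ht.toFinset.card, fun n => sepNum_le_of_forall_card_le fun E hE => ?_⟩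
  refine Finset.card_le_card_of_injOn c (fun x _ => ht.mem_toFinset.2 (hct x)) ?_
  intro x hx y hy hxy
  by_contra hne
  obtain ⟨j, -, hsep⟩ := hE x hx y hy hne
  simp only [compSeq_id, id] at hsep
  have hy' := hc y
  rw [← hxy] at hy'
  linarith [hc x, dist_triangle_right x y (c x)]

theorem nadsEntropy_id_nonpos : nadsEntropy (fun x y : X => dist x y) (fun _ => id) ≤ 0 :=
  nadsEntropy_nonpos_of_sepNum_bounded fun _ => exists_sepNum_id_le

end IdentitySystem

section CantorSpace

attribute [local instance] PiNat.metricSpace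

theorem PiNat.half_lt_dist_iff {E : ℕ → Type*} [∀ n, TopologicalSpace (E n)]
    [∀ n, DiscreteTopology (E n)] {x y : ∀ n, E n} : 1 / 2 < dist x y ↔ x 0 ≠ y 0 := by
  rw [← not_le, ← pow_one (1 / 2 : ℝ), ← PiNat.mem_cylinder_iff_dist_le, PiNat.mem_cylinder_iff]
  simp

def copyCoord (n : ℕ) (x : ℕ → Bool) : ℕ → Bool :=
  Function.update x 0 (x (n + 1))

theorem continuous_copyCoord (n : ℕ) : Continuous (copyCoord n) :=
  continuous_id.update 0 (continuous_apply (n + 1))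

theorem compSeq_copyCoord (j : ℕ) (x : ℕ → Bool) :
    compSeq copyCoord j x = Function.update x 0 (x j) := by
  induction j with
  | zero => simp [compSeq]
  | succ j ih => simp [compSeq, ih, copyCoord]

theorem isSeparatedSet_copyCoord_iff {n : ℕ} {E : Set (ℕ → Bool)} :
    IsSeparatedSet (fun x y => dist x y) copyCoord n (1 / 2) E ↔
      ∀ x ∈ E, ∀ y ∈ E, x ≠ y → ∃ j < n, x j ≠ y j := by
  simp only [IsSeparatedSet, compSeq_copyCoord, PiNat.half_lt_dist_iff, Function.update_self]

theorem sepNum_copyCoord (n : ℕ) :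
    sepNum (fun x y => dist x y) copyCoord n (1 / 2) = 2 ^ n := by
  have hbound (E : Finset (ℕ → Bool))
      (hE : IsSeparatedSet (fun x y => dist x y) copyCoord n (1 / 2) E) : E.card ≤ 2 ^ n := by
    rw [isSeparatedSet_copyCoord_iff] at hE
    calc E.card ≤ (Finset.univ : Finset (Fin n → Bool)).card := by
          refine Finset.card_le_card_of_injOn (fun x i => x i) (fun _ _ => Finset.mem_univ _) ?_
          intro x hx y hy hxy
          by_contra hne
          obtain ⟨j, hj, hxyj⟩ := hE x hx y hy hne
          exact hxyj (congrFun hxy ⟨j, hj⟩)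
      _ = 2 ^ n := by simp
  let extend : (Fin n → Bool) ↪ (ℕ → Bool) :=
    ⟨fun v => Function.extend Fin.val v fun _ => false,
      Function.extend_injective Fin.val_injective _⟩
  have hsep : IsSeparatedSet (fun x y => dist x y) copyCoord n (1 / 2)
      (Finset.univ.map extend : Set (ℕ → Bool)) := by
    simp only [isSeparatedSet_copyCoord_iff, Finset.coe_map, Finset.coe_univ, Set.image_univ,
      Set.forall_mem_range]
    intro v w hvw
    obtain ⟨j, hj⟩ := Function.ne_iff.1 fun h => hvw (congrArg extend h)
    refine ⟨j, j.isLt, ?_⟩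
    simpa [extend, Fin.val_injective.extend_apply] using hj
  refine le_antisymm (sepNum_le_of_forall_card_le hbound) ?_
  simpa using hsep.card_le_sepNum hbound

def dropHead (x : ℕ → Bool) : ℕ → Bool := fun i => x (i + 1)

theorem continuous_dropHead : Continuous dropHead :=
  continuous_pi fun i => continuous_apply (i + 1)

theorem dropHead_surjective : Function.Surjective dropHead :=
  fun y => ⟨fun i => Nat.casesOn i false y, rfl⟩

theorem dropHead_comp_copyCoord (n : ℕ) : dropHead ∘ copyCoord n = dropHead := by
  ext x i
  simp [dropHead, copyCoord]

theorem ncard_preimage_dropHead_le (y : ℕ → Bool) : (dropHead ⁻¹' {y}).ncard ≤ 2 := by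
  have hinj : Set.InjOn (fun x => x 0) (dropHead ⁻¹' {y}) := by
    intro x hx x' hx' h0
    have htail : dropHead x = dropHead x' := hx.trans hx'.symm
    funext i
    cases i with
    | zero => exact h0
    | succ i => exact congrFun htail i
  calc (dropHead ⁻¹' {y}).ncard ≤ (Set.univ : Set Bool).ncard :=
        Set.ncard_le_ncard_of_injOn _ (fun _ _ => Set.mem_univ _) hinj
    _ = 2 := by simp

noncomputable def copyCoordSystem : NADS := ⟨ℕ → Bool, copyCoord, continuous_copyCoord⟩

noncomputable def identitySystem : NADS := ⟨ℕ → Bool, fun _ => id, fun _ => continuous_id⟩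

end CantorSpace

theorem finite_to_one_not_preserving :
    ∃ (S T : NADS) (π : S.carrier → T.carrier),
      Continuous π ∧ Function.Surjective π ∧
      (∀ n, π ∘ S.maps n = T.maps n ∘ π) ∧
      (∀ y : T.carrier, Set.ncard (π ⁻¹' {y}) ≤ 2) ∧
      nadsEntropy (fun x y : T.carrier => dist x y) T.maps <
        nadsEntropy (fun x y : S.carrier => dist x y) S.maps := by
  refine ⟨copyCoordSystem, identitySystem, dropHead, continuous_dropHead, dropHead_surjective,
    dropHead_comp_copyCoord, ncard_preimage_dropHead_le, ?_⟩
  calc nadsEntropy _ identitySystem.maps ≤ 0 := nadsEntropy_id_nonpos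
    _ < (Real.log 2 : EReal) := by exact_mod_cast Real.log_pos one_lt_two
    _ ≤ nadsEntropy _ copyCoordSystem.maps := by
      exact_mod_cast log_le_nadsEntropy_of_pow_le_sepNum two_pos one_half_pos
        fun n => (sepNum_copyCoord n).ge
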